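/- Let 0 <= a < 3, let h > 0, let nu_h be the probability measure on R with triangular density h^{-1}(1 - |x|/h)_+, whose Fourier transform is hat{nu_h}(y) = (sin(hy/2)/(hy/2))^2. Then there is a constant C(a), depending only on a, such that for every measurable function f on R with period 2*pi/h, integral over R of |y|^a |f(y)|^2 |hat{nu_h}(y)|^2 dy <= C(a) * integral over [-pi/h, pi/h] of |y|^a |f(y)|^2 dy. -/
import Mathlib

open MeasureTheory Real

/-- The Fourier transform of the triangular density `ν_h`. -/
noncomputable def hatNu (h y : ℝ) : ℝ := (Real.sin (h*y/2) / (h*y/2))^2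

noncomputable def cK (a : ℝ) (k : ℤ) : ℝ :=
  if k = 0 then 1
  else ((2*(k.natAbs:ℝ)+1)*π/2)^a * (16 / ((2*(k.natAbs:ℝ)-1)^4 * π^4))

lemma cK_est (a : ℝ) (ha0 : 0 ≤ a) (ha : a < 3) (N : ℝ) (hN : 1 ≤ N) :
    ((2*N+1)*π/2)^a * (16 / ((2*N-1)^4 * π^4))
      ≤ (3*π/2)^a * (16/π^4) * (1 / N^(4-a)) := by
  have hπ := Real.pi_pos
  have h2N : (1:ℝ) ≤ 2*N-1 := by linarith
  have h2N0 : (0:ℝ) < 2*N-1 := by linarith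
  have key : (2*N-1)^a * N^(4-a) ≤ (2*N-1)^4 := by
    calc (2*N-1)^a * N^(4-a)
        ≤ (2*N-1)^a * (2*N-1)^(4-a) := by
          apply mul_le_mul_of_nonneg_left
            (Real.rpow_le_rpow (by linarith) (by linarith) (by linarith))
            (Real.rpow_nonneg (by linarith) a)
      _ = (2*N-1)^(a + (4-a)) := (Real.rpow_add h2N0 _ _).symm
      _ = (2*N-1)^((4:ℕ):ℝ) := by norm_num
      _ = (2*N-1)^(4:ℕ) := Real.rpow_natCast _ 4
  have h1 : ((2*N+1)*π/2)^a ≤ (3*π/2)^a * (2*N-1)^a := by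
    rw [← Real.mul_rpow (by positivity) (by linarith)]
    apply Real.rpow_le_rpow (by positivity) (by nlinarith) ha0
  calc ((2*N+1)*π/2)^a * (16 / ((2*N-1)^4 * π^4))
      ≤ ((3*π/2)^a * (2*N-1)^a) * (16 / ((2*N-1)^4 * π^4)) := by
        apply mul_le_mul_of_nonneg_right h1 (by positivity)
    _ ≤ (3*π/2)^a * (16/π^4) * (1 / N^(4-a)) := by
        rw [mul_assoc, mul_assoc]
        apply mul_le_mul_of_nonneg_left _ (Real.rpow_nonneg (by positivity) a)
        have hA : (0:ℝ) < (2*N-1)^a := Real.rpow_pos_of_pos h2N0 a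
        have hB : (0:ℝ) < N^(4-a) := Real.rpow_pos_of_pos (by linarith) _
        rw [show (2*N-1)^a * (16 / ((2*N-1)^4 * π^4))
              = (16*(2*N-1)^a) / ((2*N-1)^4 * π^4) by ring,
            show (16/π^4) * (1 / N^(4-a)) = 16 / (π^4 * N^(4-a)) by ring,
            div_le_div_iff₀ (by positivity) (by positivity)]
        nlinarith [mul_le_mul_of_nonneg_right key (le_of_lt (pow_pos hπ 4))]

lemma cK_summable (a : ℝ) (ha0 : 0 ≤ a) (ha : a < 3) : Summable (cK a) := by
  have hsymm : ∀ n : ℕ, cK a (-(n:ℤ)) = cK a (n:ℤ) := by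
    intro n; simp [cK, Int.natAbs_neg]
  have hnat : Summable (fun n : ℕ => cK a (n:ℤ)) := by
    rw [← summable_nat_add_iff 1]
    have hK : Summable (fun n : ℕ =>
        ((3*π/2)^a * (16/π^4)) * (1 / ((n+1:ℕ):ℝ)^(4-a))) :=
      (summable_nat_add_iff 1).2
        ((Real.summable_one_div_nat_rpow.mpr (by linarith)).mul_left _)
    apply hK.of_nonneg_of_le
    · intro n
      rw [cK, if_neg (by exact_mod_cast (show ((n+1:ℕ):ℤ) ≠ 0 by exact_mod_cast Nat.succ_ne_zero n))]
      positivity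
    · intro n
      have hNA : ((((n+1:ℕ):ℤ)).natAbs : ℝ) = ((n:ℕ):ℝ) + 1 := by
        rw [Int.natAbs_natCast]; push_cast; ring
      rw [cK, if_neg (by exact_mod_cast (show ((n+1:ℕ):ℤ) ≠ 0 by exact_mod_cast Nat.succ_ne_zero n)), hNA]
      have := cK_est a ha0 ha ((n:ℝ)+1) (by linarith [Nat.cast_nonneg (α:=ℝ) n])
      calc ((2*((n:ℝ)+1)+1)*π/2)^a * (16 / ((2*((n:ℝ)+1)-1)^4 * π^4))
          ≤ (3*π/2)^a * (16/π^4) * (1 / ((n:ℝ)+1)^(4-a)) := this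
        _ = (3*π/2)^a * (16/π^4) * (1 / ((n+1:ℕ):ℝ)^(4-a)) := by push_cast; ring_nf
  apply Summable.of_nat_of_neg hnat
  exact (summable_congr (fun n => hsymm n)).mpr hnat


lemma cK_nonneg (a : ℝ) (k : ℤ) : 0 ≤ cK a k := by
  unfold cK
  split
  · norm_num
  · positivity

lemma cK_zero (a : ℝ) : cK a 0 = 1 := by simp [cK]

lemma hatNu_le_one (h y : ℝ) : hatNu h y ≤ 1 := by
  unfold hatNu
  set x := h*y/2
  rcases eq_or_ne x 0 with hx | hx
  · rw [hx]; norm_num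
  · rw [sq_le_one_iff_abs_le_one, abs_div, div_le_one (abs_pos.mpr hx)]
    exact Real.abs_sin_le_abs

lemma sin_pow_four_le (a u : ℝ) (ha0 : 0 ≤ a) (ha : a < 3) (s : ℝ)
    (hs1 : |s| ≤ 1) (hsu : |s| ≤ u) : s^4 ≤ u^a := by
  have hu0 : 0 ≤ u := le_trans (abs_nonneg s) hsu
  have h4 : s^4 = |s|^(4:ℕ) := by
    rw [pow_abs]; exact (abs_of_nonneg (by positivity)).symm
  by_cases hu1 : u ≤ 1
  · rcases eq_or_lt_of_le hu0 with hu | hu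
    · have : s^4 ≤ 0 := by
        rw [h4]
        calc |s|^(4:ℕ) ≤ u^(4:ℕ) := pow_le_pow_left₀ (abs_nonneg s) hsu 4
          _ = 0 := by rw [← hu]; norm_num
      exact this.trans (Real.rpow_nonneg hu0 a)
    · calc s^4 = |s|^(4:ℕ) := h4
        _ ≤ u^(4:ℕ) := pow_le_pow_left₀ (abs_nonneg s) hsu 4
        _ = u^((4:ℕ):ℝ) := (Real.rpow_natCast u 4).symm
        _ ≤ u^a := by
            apply Real.rpow_le_rpow_of_exponent_ge hu hu1
            push_cast; linarith
  · push_neg at hu1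
    calc s^4 = |s|^(4:ℕ) := h4
      _ ≤ 1^(4:ℕ) := pow_le_pow_left₀ (abs_nonneg s) hs1 4
      _ = 1^a := by rw [one_pow, Real.one_rpow]
      _ ≤ u^a := Real.rpow_le_rpow zero_le_one hu1.le ha0

lemma kernel_bound (a : ℝ) (ha0 : 0 ≤ a) (ha : a < 3) (h : ℝ) (hh : 0 < h) (k : ℤ) (z : ℝ)
    (hz : z ∈ Set.Ico (-(π/h)) (π/h)) :
    |z + 2*(k:ℝ)*(π/h)|^a * (hatNu h (z + 2*(k:ℝ)*(π/h)))^2 ≤ cK a k * |z|^a := by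
  have hπ := Real.pi_pos
  set T := π/h with hTdef
  have hT : 0 < T := by positivity
  have hhT : h * T = π := by rw [hTdef]; field_simp
  obtain ⟨hz1, hz2⟩ := hz
  have hzabs : |z| ≤ T := abs_le.mpr ⟨hz1, hz2.le⟩
  set y := z + 2*(k:ℝ)*T with hydef
  -- sin identity
  have hhy : h*y/2 = h*z/2 + (k:ℝ)*π := by
    rw [hydef, ← hhT]; ring
  have hsin : sin (h*y/2)^2 = sin (h*z/2)^2 := by
    rw [hhy, Real.sin_add_int_mul_pi, mul_pow]
    have h1 : ((-1:ℝ)^k)^2 = 1 := by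
      rw [sq, ← zpow_add₀ (by norm_num : (-1:ℝ) ≠ 0)]
      exact Even.neg_one_zpow ⟨k, rfl⟩
    rw [h1, one_mul]
  have hNu2 : (hatNu h y)^2 = sin (h*z/2)^4 / (h*y/2)^4 := by
    unfold hatNu
    rw [← pow_mul, div_pow]
    norm_num
    congr 1
    rw [show (4:ℕ) = 2*2 from rfl, pow_mul, pow_mul, hsin]
  rcases eq_or_ne k 0 with hk | hk
  · subst hk
    have hy0 : y = z := by rw [hydef]; push_cast; ring
    rw [hy0, cK, if_pos rfl, one_mul]
    have h1 : (hatNu h z)^2 ≤ 1 :=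
      pow_le_one₀ (sq_nonneg _) (hatNu_le_one h z)
    calc |z|^a * (hatNu h z)^2 ≤ |z|^a * 1 :=
          mul_le_mul_of_nonneg_left h1 (Real.rpow_nonneg (abs_nonneg z) a)
      _ = |z|^a := mul_one _
  · set m := (k.natAbs : ℝ) with hmdef
    have hm1 : 1 ≤ m := by
      rw [hmdef]
      exact_mod_cast Nat.one_le_iff_ne_zero.mpr (Int.natAbs_ne_zero.mpr hk)
    have hm0 : (0:ℝ) ≤ m := by linarith
    have h2m : (0:ℝ) < 2*m-1 := by linarith
    have hkabs : |(k:ℝ)| = m := by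
      rw [hmdef, Nat.cast_natAbs]; norm_num
    have h2kT : |2*(k:ℝ)*T| = 2*m*T := by
      rw [abs_mul, abs_mul, abs_two, hkabs, abs_of_pos hT]
    have hy_ub : |y| ≤ (2*m+1)*T := by
      calc |y| ≤ |z| + |2*(k:ℝ)*T| := abs_add_le _ _
        _ = |z| + 2*m*T := by rw [h2kT]
        _ ≤ (2*m+1)*T := by linarith
    have hy_lb : (2*m-1)*T ≤ |y| := by
      have h1 : |2*(k:ℝ)*T| = |y - z| := by rw [hydef]; ring_nf
      have h2 : |y - z| ≤ |y| + |z| := abs_sub _ _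
      rw [h1] at h2kT
      linarith [h2kT ▸ h2]
    have hDabs : (h*y/2)^4 = (h*|y|/2)^4 := by
      rcases abs_cases y with ⟨h1, _⟩ | ⟨h1, _⟩ <;> rw [h1] <;> ring
    have hPb : (0:ℝ) < (2*m-1)*π/2 := div_pos (mul_pos h2m hπ) two_pos
    have hP : (0:ℝ) < ((2*m-1)*π/2)^4 := pow_pos hPb 4
    have hD : ((2*m-1)*π/2)^4 ≤ (h*y/2)^4 := by
      rw [hDabs]
      apply pow_le_pow_left₀ hPb.le
      calc (2*m-1)*π/2 = h*((2*m-1)*T)/2 := by rw [← hhT]; ring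
        _ ≤ h*|y|/2 := by nlinarith
    have hS : sin (h*z/2)^4 ≤ (h/2*|z|)^a := by
      apply sin_pow_four_le a _ ha0 ha
      · exact abs_le.mpr ⟨neg_one_le_sin _, sin_le_one _⟩
      · calc |sin (h*z/2)| ≤ |h*z/2| := Real.abs_sin_le_abs
          _ = h/2*|z| := by rw [show h*z/2 = (h/2)*z by ring, abs_mul,
              abs_of_pos (by positivity : (0:ℝ) < h/2)]
    have hYA : |y|^a ≤ ((2*m+1)*T)^a :=
      Real.rpow_le_rpow (abs_nonneg y) hy_ub ha0
    have hfrac : sin (h*z/2)^4 / (h*y/2)^4 ≤ (h/2*|z|)^a / ((2*m-1)*π/2)^4 :=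
      div_le_div₀ (Real.rpow_nonneg (by positivity) a) hS hP hD
    have hE : ((2*m+1)*T)^a * (h/2*|z|)^a = ((2*m+1)*π/2)^a * |z|^a := by
      rw [← Real.mul_rpow (by nlinarith : (0:ℝ) ≤ (2*m+1)*T) (by positivity),
          ← Real.mul_rpow (by positivity) (abs_nonneg z)]
      congr 1
      rw [← hhT]; ring
    rw [hNu2, cK, if_neg hk, ← hmdef]
    calc |y|^a * (sin (h*z/2)^4 / (h*y/2)^4)
        ≤ ((2*m+1)*T)^a * ((h/2*|z|)^a / ((2*m-1)*π/2)^4) := by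
          apply mul_le_mul hYA hfrac (by positivity) (Real.rpow_nonneg (by positivity) a)
      _ = (((2*m+1)*T)^a * (h/2*|z|)^a) / ((2*m-1)*π/2)^4 := by ring
      _ = (((2*m+1)*π/2)^a * |z|^a) / ((2*m-1)*π/2)^4 := by rw [hE]
      _ = ((2*m+1)*π/2)^a * (16 / ((2*m-1)^4 * π^4)) * |z|^a := by
          rw [show ((2*m-1)*π/2)^4 = (2*m-1)^4*π^4/16 by ring]
          have hne : (2*m-1)^4*π^4 ≠ 0 :=
            mul_ne_zero (pow_ne_zero _ (ne_of_gt h2m)) (pow_ne_zero _ (ne_of_gt hπ))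
          field_simp


/-- For `0 ≤ a < 3` there is a constant `C(a)` such that for every `h > 0` and every
measurable `f : ℝ → ℂ` with period `2π/h`,
`∫_ℝ |y|^a |f(y)|² |ν̂_h(y)|² dy ≤ C(a) ∫_{-π/h}^{π/h} |y|^a |f(y)|² dy`. -/
theorem periodic_weighted_triangular_bound (a : ℝ) (ha0 : 0 ≤ a) (ha : a < 3) :
    ∃ C : ℝ, 0 < C ∧ ∀ h : ℝ, 0 < h → ∀ f : ℝ → ℂ, Measurable f →
      (∀ y : ℝ, f (y + 2*π/h) = f y) →
      ∫⁻ y : ℝ, ENNReal.ofReal (|y|^a * ‖f y‖^2 * (hatNu h y)^2)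
        ≤ ENNReal.ofReal C *
          ∫⁻ y in Set.Icc (-(π/h)) (π/h), ENNReal.ofReal (|y|^a * ‖f y‖^2) := by
  refine ⟨∑' k, cK a k, ?_, ?_⟩
  · have h1 : cK a 0 ≤ ∑' k, cK a k :=
      Summable.le_tsum (cK_summable a ha0 ha) 0 (fun j _ => cK_nonneg a j)
    rw [cK_zero] at h1
    linarith
  intro h hh f hfm hfp
  have hπ := Real.pi_pos
  have hT : (0:ℝ) < π/h := by positivity
  -- periodicity for integer multiples
  have hper : ∀ (k : ℤ) (z : ℝ), f (z + 2*(k:ℝ)*(π/h)) = f z := by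
    intro k z
    have hp : Function.Periodic f (2*π/h) := hfp
    have h1 := (hp.int_mul k) z
    rw [show z + 2*(k:ℝ)*(π/h) = z + (k:ℝ)*(2*π/h) by ring]
    exact h1
  -- the integrand
  set g : ℝ → ENNReal :=
    fun y => ENNReal.ofReal (|y|^a * ‖f y‖^2 * (hatNu h y)^2) with hgdef
  have hw : Measurable fun z : ℝ => |z|^a * ‖f z‖^2 :=
    ((Real.continuous_rpow_const ha0).measurable.comp measurable_abs).mul (hfm.norm.pow_const 2)
  have hg : Measurable g := by
    apply Measurable.ennreal_ofReal
    apply hw.mul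
    have h1 : Measurable fun y : ℝ => h*y/2 :=
      (measurable_id.const_mul h).div_const 2
    exact (((Real.measurable_sin.comp h1).div h1).pow_const 2).pow_const 2
  -- the partition
  set S : ℤ → Set ℝ :=
    fun k => Set.Ico ((2*(k:ℝ)-1)*(π/h)) ((2*(k:ℝ)+1)*(π/h)) with hSdef
  have hSm : ∀ k, MeasurableSet (S k) := fun k => measurableSet_Ico
  have hU : (⋃ k, S k) = Set.univ := by
    ext y
    simp only [Set.mem_iUnion, Set.mem_univ, iff_true, hSdef, Set.mem_Ico]
    refine ⟨⌊(y + π/h)/(2*(π/h))⌋, ?_, ?_⟩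
    · have h1 := (le_div_iff₀ (by positivity : (0:ℝ) < 2*(π/h))).mp
        (Int.floor_le ((y + π/h)/(2*(π/h))))
      linarith
    · have h1 := (div_lt_iff₀ (by positivity : (0:ℝ) < 2*(π/h))).mp
        (Int.lt_floor_add_one ((y + π/h)/(2*(π/h))))
      linarith
  have hdisj : Pairwise (Function.onFun Disjoint S) := by
    intro k l hkl
    apply Set.disjoint_left.mpr
    intro x hxk hxl
    simp only [hSdef, Set.mem_Ico] at hxk hxl
    have h1 : (l:ℝ) < (k:ℝ)+1 := by nlinarith [hxl.1, hxk.2]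
    have h2 : (k:ℝ) < (l:ℝ)+1 := by nlinarith [hxk.1, hxl.2]
    have h1' : l < k+1 := by exact_mod_cast h1
    have h2' : k < l+1 := by exact_mod_cast h2
    omega
  set J : ENNReal :=
    ∫⁻ z in Set.Ico (-(π/h)) (π/h), ENNReal.ofReal (|z|^a * ‖f z‖^2) with hJdef
  calc ∫⁻ y, g y = ∫⁻ y in ⋃ k, S k, g y := by rw [hU, Measure.restrict_univ]
    _ = ∑' k : ℤ, ∫⁻ y in S k, g y := lintegral_iUnion hSm hdisj g
    _ = ∑' k : ℤ, ∫⁻ z in Set.Ico (-(π/h)) (π/h), g (z + 2*(k:ℝ)*(π/h)) := by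
        apply tsum_congr
        intro k
        have h1 := (measurePreserving_add_right volume (2*(k:ℝ)*(π/h))).setLIntegral_comp_preimage_emb
          (measurableEmbedding_addRight (2*(k:ℝ)*(π/h))) g (S k)
        rw [← h1, hSdef, Set.preimage_add_const_Ico,
          show (2*(k:ℝ)-1)*(π/h) - 2*(k:ℝ)*(π/h) = -(π/h) by ring,
          show (2*(k:ℝ)+1)*(π/h) - 2*(k:ℝ)*(π/h) = π/h by ring]
    _ ≤ ∑' k : ℤ, ENNReal.ofReal (cK a k) * J := by
        apply ENNReal.tsum_le_tsum
        intro k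
        calc ∫⁻ z in Set.Ico (-(π/h)) (π/h), g (z + 2*(k:ℝ)*(π/h))
            ≤ ∫⁻ z in Set.Ico (-(π/h)) (π/h),
                ENNReal.ofReal (cK a k) * ENNReal.ofReal (|z|^a * ‖f z‖^2) := by
              apply setLIntegral_mono' measurableSet_Ico
              intro z hz
              rw [hgdef]
              simp only
              rw [hper k z, ← ENNReal.ofReal_mul (cK_nonneg a k)]
              apply ENNReal.ofReal_le_ofReal
              have hkb := kernel_bound a ha0 ha h hh k z hz
              have hfz : (0:ℝ) ≤ ‖f z‖^2 := by positivity
              nlinarith [mul_le_mul_of_nonneg_right hkb hfz]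
          _ = ENNReal.ofReal (cK a k) * J := by
              rw [hJdef]
              exact lintegral_const_mul' _ _ ENNReal.ofReal_ne_top
    _ = ENNReal.ofReal (∑' k, cK a k) * J := by
        rw [ENNReal.tsum_mul_right,
          ENNReal.ofReal_tsum_of_nonneg (cK_nonneg a) (cK_summable a ha0 ha)]
    _ ≤ ENNReal.ofReal (∑' k, cK a k) *
          ∫⁻ y in Set.Icc (-(π/h)) (π/h), ENNReal.ofReal (|y|^a * ‖f y‖^2) := by
        apply mul_le_mul_right
        rw [hJdef]
        exact lintegral_mono_set Set.Ico_subset_Icc_self
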